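/- Hence: a split generic object of a split fibration need not be a generic object of the underlying fibration. -/

import Mathlib

open CategoryTheory

universe w v u

set_option linter.unusedVariables false

/-- A morphism `f : X ⟶ Y` in `E` is cartesian with respect to `p : E ⥤ B`: for any
`g : H ⟶ Y` and factorization `p g = w ≫ p f` there is a unique `h : H ⟶ X` over `w`
with `h ≫ f = g`. -/
def IsCartesianMor {E : Type*} {B : Type*} [Category E] [Category B]
    (p : E ⥤ B) {X Y : E} (f : X ⟶ Y) : Prop :=
  ∀ (H : E) (g : H ⟶ Y) (w : p.obj H ⟶ p.obj X),
    p.map g = w ≫ p.map f → ∃! h : H ⟶ X, p.map h = w ∧ h ≫ f = g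

/-- `p : E ⥤ B` is a (Grothendieck) fibration: every `u : I ⟶ p Y` has a cartesian lift. -/
def IsFibration {E : Type*} {B : Type*} [Category E] [Category B] (p : E ⥤ B) : Prop :=
  ∀ (Y : E) (I : B) (u : I ⟶ p.obj Y),
    ∃ (X : E) (f : X ⟶ Y) (e : p.obj X = I),
      IsCartesianMor p f ∧ p.map f = eqToHom e ≫ u

/-- The category `Fam C` of set-indexed families of objects of `C`: an object is a pair of an
index type `I` and a family `E : I → C`; a morphism `(J, F) ⟶ (I, E)` is a reindexing function
`u : J → I` together with morphisms `F j ⟶ E (u j)`. -/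
structure Fam (C : Type u) [Category.{v} C] where
  I : Type w
  E : I → C

namespace Fam

variable {C : Type u} [Category.{v} C]

instance : Category.{max w v} (Fam.{w} C) where
  Hom X Y := Σ u : X.I → Y.I, ∀ i, X.E i ⟶ Y.E (u i)
  id X := ⟨fun i => i, fun i => 𝟙 _⟩
  comp f g := ⟨fun i => g.1 (f.1 i), fun i => f.2 i ≫ g.2 (f.1 i)⟩
  id_comp f := Sigma.ext rfl (heq_of_eq (funext fun i => Category.id_comp _))
  comp_id f := Sigma.ext rfl (heq_of_eq (funext fun i => Category.comp_id _))
  assoc f g h := Sigma.ext rfl (heq_of_eq (funext fun i => Category.assoc _ _ _))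

/-- The projection `Fam C ⥤ Set` sending an indexed family to its index set. -/
def proj (C : Type u) [Category.{v} C] : Fam.{w} C ⥤ Type w where
  obj X := X.I
  map f := TypeCat.ofHom f.1

end Fam

/-- `T` is a generic object: for every `X` there is a unique base morphism `u : pX ⟶ pT`
over which some cartesian morphism `X ⟶ T` lies. -/
def IsGenericObj {E : Type*} {B : Type*} [Category E] [Category B]
    (p : E ⥤ B) (T : E) : Prop :=
  ∀ X : E, ∃! u : p.obj X ⟶ p.obj T,
    ∃ f : X ⟶ T, IsCartesianMor p f ∧ p.map f = u

/-- `T` is a strong generic object: every `X` admits a unique cartesian morphism `X ⟶ T`. -/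
def IsStrongGenericObj {E : Type*} {B : Type*} [Category E] [Category B]
    (p : E ⥤ B) (T : E) : Prop :=
  ∀ X : E, ∃! f : X ⟶ T, IsCartesianMor p f

/-- `T` is a split generic object for the canonical splitting of `Fam C ⥤ Set`. -/
def FamSplitGeneric {C : Type u} [Category.{v} C] (T : Fam.{w} C) : Prop :=
  ∀ X : Fam.{w} C, ∃! u : X.I → T.I, Fam.mk X.I (fun i => T.E (u i)) = X

/-!
In `Fam C` every morphism with invertible components is cartesian over its reindexing. Take
`T = (C, id)`, the family of all objects of `C`: the reindexing of `T` along `u : I → C` is the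
family `u` itself, so `T` is split generic. But if `a ≠ b` are isomorphic objects, the singleton
family `{a}` has cartesian maps into `T` over both `const a` and `const b`, so `T` is not generic.
-/

namespace Fam

section

variable {C : Type u} [Category.{v} C]

@[simp]
lemma comp_snd {X Y Z : Fam.{w} C} (f : X ⟶ Y) (g : Y ⟶ Z) (i : X.I) :
    (f ≫ g).2 i = f.2 i ≫ g.2 (f.1 i) :=
  rfl

lemma hom_ext {X Y : Fam.{w} C} {f g : X ⟶ Y} (h₁ : f.1 = g.1)
    (h₂ : ∀ i, f.2 i ≫ eqToHom (by rw [h₁]) = g.2 i) : f = g := by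
  obtain ⟨f₁, f₂⟩ := f
  obtain ⟨g₁, g₂⟩ := g
  obtain rfl : f₁ = g₁ := h₁
  simp only [eqToHom_refl, Category.comp_id] at h₂
  exact Sigma.ext rfl (heq_of_eq (funext h₂))

lemma congr_snd {X Y : Fam.{w} C} {f g : X ⟶ Y} (h : f = g) (i : X.I) :
    f.2 i ≫ eqToHom (by rw [h]) = g.2 i := by
  subst h
  simp

lemma isCartesianMor_proj_of_isIso {X Y : Fam.{w} C} (f : X ⟶ Y) [∀ i, IsIso (f.2 i)] :
    IsCartesianMor (proj C) f := by
  intro H g w hw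
  obtain ⟨u, rfl⟩ : ∃ u : H.I → X.I, TypeCat.ofHom u = w := ⟨w, rfl⟩
  have hgu (j : H.I) : g.1 j = f.1 (u j) := ConcreteCategory.congr_hom hw j
  refine ⟨⟨u, fun j => g.2 j ≫ eqToHom (congrArg Y.E (hgu j)) ≫ inv (f.2 (u j))⟩,
    ⟨rfl, hom_ext (funext fun j => (hgu j).symm) fun j => ?_⟩, ?_⟩
  · simp
  · rintro ⟨h₁, h₂⟩ ⟨hp, hh⟩
    obtain rfl : h₁ = u := funext fun j => ConcreteCategory.congr_hom hp j
    refine hom_ext rfl fun j => ?_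
    simp [← congr_snd hh j]

end

lemma famSplitGeneric_tautological (C : Type w) [Category.{v} C] :
    FamSplitGeneric (Fam.mk.{w} C id) := by
  rintro ⟨I, E⟩
  exact ⟨E, rfl, fun u hu => eq_of_heq (Fam.mk.inj hu).2⟩

lemma not_isGenericObj_tautological_of_iso {C : Type w} [Category.{v} C] {a b : C}
    (hab : a ≠ b) (e : a ≅ b) : ¬ IsGenericObj (proj C) (Fam.mk.{w} C id) := by
  intro hgen
  obtain ⟨u, -, huniq⟩ := hgen ⟨PUnit, fun _ => a⟩
  have ha : TypeCat.ofHom (fun _ => a) = u :=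
    huniq _ ⟨⟨fun _ => a, fun _ => 𝟙 a⟩, isCartesianMor_proj_of_isIso _, rfl⟩
  have hb : TypeCat.ofHom (fun _ => b) = u :=
    huniq _ ⟨⟨fun _ => b, fun _ => e.hom⟩, isCartesianMor_proj_of_isIso _, rfl⟩
  exact hab (ConcreteCategory.congr_hom (ha.trans hb.symm) PUnit.unit)

end Fam

/-- A split generic object of a split fibration need not be a generic object: there is a
category `C` and an object `T` of the (canonically split) family fibration `Fam C ⥤ Set`
which is a split generic object but not a generic object. -/
theorem splitGeneric_not_generic_exists :
    ∃ (C : Cat.{w, w}) (T : Fam.{w} C),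
      FamSplitGeneric T ∧ ¬ IsGenericObj (Fam.proj.{w} C) T := by
  let C := ULiftHom.{w} (Codiscrete (ULift.{w} Bool))
  have htf : (ULiftHom.up.obj ⟨⟨true⟩⟩ : C) ≠ ULiftHom.up.obj ⟨⟨false⟩⟩ := fun h =>
    Bool.noConfusion (congrArg (fun x : Codiscrete (ULift.{w} Bool) => x.as.down) h)
  exact ⟨Cat.of C, Fam.mk C id, Fam.famSplitGeneric_tautological C,
    Fam.not_isGenericObj_tautological_of_iso htf (ULiftHom.up.mapIso (Codiscrete.iso _ _))⟩
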